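/- Let B₁ and B₂ be finite skew left braces, α a group homomorphism from (B₂,∘) to Aut(B₁,+,∘), and B := B₁ ⋊_α B₂ the semidirect product. If B is semiprime, then B₁ is semiprime. -/

import Mathlib

/-- A *skew left brace* is a set with two group structures `(B,+)` and `(B,∘)`
(the latter written multiplicatively) satisfying `a∘(b+c) = a∘b - a + a∘c`.
The two identity elements automatically coincide. -/
class SkewLeftBrace (B : Type*) extends AddGroup B, Group B where
  mul_add_eq : ∀ a b c : B, a * (b + c) = a * b - a + a * c

namespace SkewLeftBrace

variable {B : Type*} [SkewLeftBrace B]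

/-- The map `λ_a : b ↦ -a + a∘b`. -/
def lmap (a b : B) : B := -a + a * b

/-- The brace star operation `a*b := -a + a∘b - b`. -/
def bstar (a b : B) : B := -a + a * b - b

/-- `X*Y`: the additive subgroup generated by all `bstar x y`, `x ∈ X`, `y ∈ Y`,
regarded as a set. -/
def setStar (X Y : Set B) : Set B :=
  ↑(AddSubgroup.closure {z : B | ∃ x ∈ X, ∃ y ∈ Y, z = bstar x y})

/-- Pointwise sum of two subsets. -/
def setSum (X Y : Set B) : Set B := {w : B | ∃ x ∈ X, ∃ y ∈ Y, w = x + y}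

/-- `X^Z := {z + x - z : x ∈ X, z ∈ Z}`. -/
def setConj (X Z : Set B) : Set B := {w : B | ∃ x ∈ X, ∃ z ∈ Z, w = z + x + -z}

/-- An ideal of a skew left brace: a subgroup of `(B,+)` which is normal in both
`(B,+)` and `(B,∘)` and invariant under all the maps `λ_a`. -/
structure IsIdeal (I : Set B) : Prop where
  zero_mem : (0 : B) ∈ I
  add_mem : ∀ ⦃x y : B⦄, x ∈ I → y ∈ I → x + y ∈ I
  neg_mem : ∀ ⦃x : B⦄, x ∈ I → -x ∈ I
  add_conj_mem : ∀ (b : B) ⦃x : B⦄, x ∈ I → b + x + -b ∈ I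
  mul_mem : ∀ ⦃x y : B⦄, x ∈ I → y ∈ I → x * y ∈ I
  inv_mem : ∀ ⦃x : B⦄, x ∈ I → x⁻¹ ∈ I
  mul_conj_mem : ∀ (b : B) ⦃x : B⦄, x ∈ I → b * x * b⁻¹ ∈ I
  lmap_mem : ∀ (a : B) ⦃x : B⦄, x ∈ I → lmap a x ∈ I

/-- A minimal ideal: a nonzero ideal whose only sub-ideals are `{0}` and itself. -/
def IsMinimalIdeal (I : Set B) : Prop :=
  IsIdeal I ∧ I ≠ {0} ∧ ∀ J : Set B, IsIdeal J → J ⊆ I → J = {0} ∨ J = I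

theorem mul_zero' (a : B) : a * (0 : B) = a := by
  have h := SkewLeftBrace.mul_add_eq a (0 : B) (0 : B)
  rw [add_zero] at h
  have h2 : a * (0:B) - a = 0 := (right_eq_add.mp h)
  exact sub_eq_zero.mp h2

theorem zero_eq_one : (0 : B) = 1 := by
  have h := mul_zero' (1 : B)
  rw [one_mul] at h
  exact h

theorem IsIdeal.one_mem {I : Set B} (h : IsIdeal I) : (1 : B) ∈ I :=
  (zero_eq_one (B := B)) ▸ h.zero_mem

variable (B) in
/-- A skew left brace is *semiprime* if `I*I ≠ {0}` for every nonzero ideal `I`. -/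
def Semiprime : Prop := ∀ I : Set B, IsIdeal I → I ≠ {0} → setStar I I ≠ {0}

variable (B) in
/-- A skew left brace is *prime*... (and) *simple* if its only ideals are `{0}` and `B`,
and these are distinct. -/
def Simple : Prop :=
  ({0} : Set B) ≠ Set.univ ∧ ∀ I : Set B, IsIdeal I → I = {0} ∨ I = Set.univ

variable (B) in
/-- A skew left brace is *Artinian* if every descending chain of ideals stabilizes. -/
def Artinian : Prop :=
  ∀ f : ℕ → Set B, (∀ n, IsIdeal (f n)) → (∀ n, f (n + 1) ⊆ f n) →
    ∃ N, ∀ n, N ≤ n → f n = f N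

/-- The `*`-products of copies of a fixed set `I`. -/
inductive IsStarPowerOf (I : Set B) : Set B → Prop
  | base : IsStarPowerOf I I
  | star {X Y : Set B} : IsStarPowerOf I X → IsStarPowerOf I Y →
      IsStarPowerOf I (setStar X Y)

variable (B) in
/-- A skew left brace is *strongly semiprime* if for every nonzero ideal `I`, every
`*`-product of copies of `I` is nonzero. -/
def StronglySemiprime : Prop :=
  ∀ I : Set B, IsIdeal I → I ≠ {0} → ∀ X : Set B, IsStarPowerOf I X → X ≠ {0}

/-- The `*`-products of nonzero ideals. -/
inductive IsStarProdOfNonzeroIdeals : Set B → Prop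
  | ideal {I : Set B} : IsIdeal I → I ≠ {0} → IsStarProdOfNonzeroIdeals I
  | star {X Y : Set B} : IsStarProdOfNonzeroIdeals X → IsStarProdOfNonzeroIdeals Y →
      IsStarProdOfNonzeroIdeals (setStar X Y)

variable (B) in
/-- A skew left brace is *strongly prime* if every `*`-product of nonzero ideals is nonzero. -/
def StronglyPrime : Prop :=
  ∀ X : Set B, IsStarProdOfNonzeroIdeals X → X ≠ {0}

end SkewLeftBrace
namespace SkewLeftBrace

variable {B : Type*} [SkewLeftBrace B]

/-- An ideal, regarded as a skew left brace with the restricted operations. -/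
def IsIdeal.brace {I : Set B} (h : IsIdeal I) : SkewLeftBrace I :=
  letI : Zero I := ⟨⟨0, h.zero_mem⟩⟩
  letI : Add I := ⟨fun x y => ⟨x.1 + y.1, h.add_mem x.2 y.2⟩⟩
  letI : Neg I := ⟨fun x => ⟨-x.1, h.neg_mem x.2⟩⟩
  letI : One I := ⟨⟨1, h.one_mem⟩⟩
  letI : Mul I := ⟨fun x y => ⟨x.1 * y.1, h.mul_mem x.2 y.2⟩⟩
  letI : Inv I := ⟨fun x => ⟨x.1⁻¹, h.inv_mem x.2⟩⟩
  { add := (· + ·)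
    zero := 0
    neg := (- ·)
    nsmul := nsmulRec
    zsmul := zsmulRec
    add_assoc := fun a b c => Subtype.ext (add_assoc a.1 b.1 c.1)
    zero_add := fun a => Subtype.ext (zero_add a.1)
    add_zero := fun a => Subtype.ext (add_zero a.1)
    neg_add_cancel := fun a => Subtype.ext (neg_add_cancel a.1)
    mul := (· * ·)
    one := 1
    inv := (·⁻¹)
    npow := npowRec
    zpow := zpowRec
    mul_assoc := fun a b c => Subtype.ext (mul_assoc a.1 b.1 c.1)
    one_mul := fun a => Subtype.ext (one_mul a.1)
    mul_one := fun a => Subtype.ext (mul_one a.1)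
    inv_mul_cancel := fun a => Subtype.ext (inv_mul_cancel a.1)
    mul_add_eq := fun a b c =>
      Subtype.ext (by
        show a.1 * (b.1 + c.1) = a.1 * b.1 + -a.1 + a.1 * c.1
        rw [SkewLeftBrace.mul_add_eq, sub_eq_add_neg]) }

/-- The direct product of two skew left braces, with componentwise operations. -/
def prodBrace (B₁ B₂ : Type*) [SkewLeftBrace B₁] [SkewLeftBrace B₂] :
    SkewLeftBrace (B₁ × B₂) :=
  { (inferInstance : AddGroup (B₁ × B₂)), (inferInstance : Group (B₁ × B₂)) with
    mul_add_eq := fun a b c =>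
      Prod.ext (by simp [SkewLeftBrace.mul_add_eq]) (by simp [SkewLeftBrace.mul_add_eq]) }

/-- Two skew left braces are isomorphic if there is a bijection preserving `+` and `∘`. -/
def IsBraceIsomorphic (A C : Type*) [SkewLeftBrace A] [SkewLeftBrace C] : Prop :=
  ∃ f : A ≃ C, (∀ x y : A, f (x + y) = f x + f y) ∧ (∀ x y : A, f (x * y) = f x * f y)

/-- A group homomorphism from `(B₂,∘)` to the automorphism group `Aut(B₁,+,∘)` of the
skew left brace `B₁`, presented as an action `act : B₂ → B₁ → B₁` by skew left brace
automorphisms. -/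
structure BraceActionHom (B₂ B₁ : Type*) [SkewLeftBrace B₂] [SkewLeftBrace B₁] where
  act : B₂ → B₁ → B₁
  act_bijective : ∀ a : B₂, Function.Bijective (act a)
  act_add : ∀ (a : B₂) (x y : B₁), act a (x + y) = act a x + act a y
  act_mul : ∀ (a : B₂) (x y : B₁), act a (x * y) = act a x * act a y
  act_hom : ∀ (a b : B₂) (x : B₁), act (a * b) x = act a (act b x)
  act_one : ∀ x : B₁, act (1 : B₂) x = x

variable {B₁ B₂ : Type*} [SkewLeftBrace B₁] [SkewLeftBrace B₂]

theorem BraceActionHom.act_one' (α : BraceActionHom B₂ B₁) (a : B₂) :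
    α.act a (1 : B₁) = 1 := by
  have h := α.act_mul a 1 1
  rw [mul_one] at h
  exact mul_eq_left.mp h.symm

/-- The underlying type of the semidirect product of two skew left braces. -/
@[ext]
structure SDP (B₁ B₂ : Type*) where
  fst : B₁
  snd : B₂

/-- The semidirect product `B₁ ⋊_α B₂` of skew left braces: the additive group is the
direct product, while `(a₁,a₂) ∘ (b₁,b₂) = (a₁ ∘ α_{a₂}(b₁), a₂ ∘ b₂)`. -/
def BraceActionHom.sdp (α : BraceActionHom B₂ B₁) : SkewLeftBrace (SDP B₁ B₂) :=
  letI : Zero (SDP B₁ B₂) := ⟨⟨0, 0⟩⟩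
  letI : Add (SDP B₁ B₂) := ⟨fun p q => ⟨p.fst + q.fst, p.snd + q.snd⟩⟩
  letI : Neg (SDP B₁ B₂) := ⟨fun p => ⟨-p.fst, -p.snd⟩⟩
  letI : One (SDP B₁ B₂) := ⟨⟨1, 1⟩⟩
  letI : Mul (SDP B₁ B₂) := ⟨fun p q => ⟨p.fst * α.act p.snd q.fst, p.snd * q.snd⟩⟩
  letI : Inv (SDP B₁ B₂) := ⟨fun p => ⟨α.act p.snd⁻¹ p.fst⁻¹, p.snd⁻¹⟩⟩
  { add := (· + ·)
    zero := 0
    neg := (- ·)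
    nsmul := nsmulRec
    zsmul := zsmulRec
    add_assoc := fun a b c =>
      SDP.ext (add_assoc a.fst b.fst c.fst) (add_assoc a.snd b.snd c.snd)
    zero_add := fun a => SDP.ext (zero_add a.fst) (zero_add a.snd)
    add_zero := fun a => SDP.ext (add_zero a.fst) (add_zero a.snd)
    neg_add_cancel := fun a => SDP.ext (neg_add_cancel a.fst) (neg_add_cancel a.snd)
    mul := (· * ·)
    one := 1
    inv := (·⁻¹)
    npow := npowRec
    zpow := zpowRec
    mul_assoc := fun a b c =>
      SDP.ext
        (by show (a.fst * α.act a.snd b.fst) * α.act (a.snd * b.snd) c.fst =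
              a.fst * α.act a.snd (b.fst * α.act b.snd c.fst)
            rw [α.act_hom, α.act_mul, mul_assoc])
        (mul_assoc a.snd b.snd c.snd)
    one_mul := fun a =>
      SDP.ext (by show (1 : B₁) * α.act 1 a.fst = a.fst; rw [α.act_one, one_mul])
        (one_mul a.snd)
    mul_one := fun a =>
      SDP.ext (by show a.fst * α.act a.snd (1 : B₁) = a.fst; rw [α.act_one', mul_one])
        (mul_one a.snd)
    inv_mul_cancel := fun a =>
      SDP.ext
        (by show α.act a.snd⁻¹ a.fst⁻¹ * α.act a.snd⁻¹ a.fst = 1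
            rw [← α.act_mul, inv_mul_cancel, α.act_one'])
        (inv_mul_cancel a.snd)
    mul_add_eq := fun a b c =>
      SDP.ext
        (by show a.fst * α.act a.snd (b.fst + c.fst) =
              a.fst * α.act a.snd b.fst + -a.fst + a.fst * α.act a.snd c.fst
            rw [α.act_add, SkewLeftBrace.mul_add_eq, sub_eq_add_neg])
        (by show a.snd * (b.snd + c.snd) = a.snd * b.snd + -a.snd + a.snd * c.snd
            rw [SkewLeftBrace.mul_add_eq, sub_eq_add_neg]) }

end SkewLeftBrace

open SkewLeftBrace

/-!
Let `I` be a nonzero ideal of `B₁` with `I * I = 0`. By finiteness `I` contains a minimal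
ideal `M`, and `M * M = 0`. The translates `α_a(M)` are again minimal ideals; two minimal
ideals are equal or meet in `0`, and `N * N' ⊆ N ∩ N'`, so `α_a(M) * α_b(M) = 0` for all
`a, b`. Hence the additive subgroup `J` generated by all translates is an `α`-invariant ideal
with `J * J = 0`, and `J × {0}` is a nonzero ideal of `B₁ ⋊_α B₂` with zero square.
-/

namespace SkewLeftBrace

section Basic

variable {B : Type*} [SkewLeftBrace B]

theorem zero_mul' (c : B) : 0 * c = c := by
  rw [zero_eq_one, one_mul]

theorem mul_eq_add_lmap (a b : B) : a * b = a + lmap a b := by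
  rw [lmap, add_neg_cancel_left]

theorem lmap_add (a x y : B) : lmap a (x + y) = lmap a x + lmap a y := by
  simp [lmap, mul_add_eq, sub_eq_add_neg, add_assoc]

def lmapAddHom (a : B) : B →+ B := AddMonoidHom.mk' (lmap a) (lmap_add a)

theorem lmap_zero (a : B) : lmap a 0 = 0 := map_zero (lmapAddHom a)

theorem lmap_neg (a x : B) : lmap a (-x) = -lmap a x := map_neg (lmapAddHom a) x

theorem mul_neg_eq (a b : B) : a * -b = a - a * b + a := by
  have h := mul_add_eq a b (-b)
  rw [add_neg_cancel, mul_zero'] at h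
  rw [eq_neg_add_iff_add_eq.mpr h.symm, neg_sub]

theorem lmap_mul (a b c : B) : lmap (a * b) c = lmap a (lmap b c) := by
  simp [lmap, mul_add_eq, mul_neg_eq, sub_eq_add_neg, add_assoc, mul_assoc]

theorem lmap_one (c : B) : lmap 1 c = c := by
  rw [lmap, one_mul, ← zero_eq_one, neg_zero, zero_add]

theorem lmap_lmap_inv (a c : B) : lmap a (lmap a⁻¹ c) = c := by
  rw [← lmap_mul, mul_inv_cancel, lmap_one]

theorem neg_eq_lmap_inv (x : B) : -x = lmap x x⁻¹ := by
  rw [lmap, mul_inv_cancel, ← zero_eq_one, add_zero]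

theorem inv_eq_lmap_neg (x : B) : x⁻¹ = lmap x⁻¹ (-x) := by
  rw [lmap, mul_neg_eq, inv_mul_cancel, ← zero_eq_one, sub_zero, neg_add_cancel_left]

theorem bstar_eq_lmap_sub (x y : B) : bstar x y = lmap x y - y := rfl

theorem bstar_eq_zero_iff {x y : B} : bstar x y = 0 ↔ lmap x y = y := sub_eq_zero

theorem bstar_zero_left (c : B) : bstar 0 c = 0 := by
  rw [bstar, neg_zero, zero_add, zero_mul', sub_self]

theorem bstar_add_left (x y c : B) :
    bstar (x + y) c = lmap x (bstar (lmap x⁻¹ y) c) + bstar x c := by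
  have hxy : x + y = x * lmap x⁻¹ y := by rw [mul_eq_add_lmap, lmap_lmap_inv]
  simp [bstar_eq_lmap_sub, hxy, lmap_mul, sub_eq_add_neg, lmap_add, lmap_neg, add_assoc]

theorem bstar_neg_left (x c : B) :
    bstar (-x) c = -lmap (-x) (bstar (lmap (-x)⁻¹ x) c) := by
  have h := bstar_add_left (-x) x c
  rw [neg_add_cancel, bstar_zero_left] at h
  exact (neg_eq_of_add_eq_zero_right h.symm).symm

theorem mul_conj_eq (b x : B) :
    b * x * b⁻¹ = b + (lmap b x + lmap b (bstar x b⁻¹)) + -b := by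
  have h : lmap x b⁻¹ = bstar x b⁻¹ + b⁻¹ := by simp [bstar_eq_lmap_sub]
  rw [mul_eq_add_lmap (b * x), lmap_mul, h, lmap_add, mul_eq_add_lmap b x, ← neg_eq_lmap_inv]
  simp [add_assoc]

end Basic

section Hom

variable {B C : Type*} [SkewLeftBrace B] [SkewLeftBrace C] {f : B → C}

theorem map_lmap (hadd : ∀ x y, f (x + y) = f x + f y) (hmul : ∀ x y, f (x * y) = f x * f y)
    (a x : B) : f (lmap a x) = lmap (f a) (f x) := by
  have hneg : ∀ x, f (-x) = -f x := map_neg (AddMonoidHom.mk' f hadd)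
  rw [lmap, lmap, hadd, hneg, hmul]

theorem map_bstar (hadd : ∀ x y, f (x + y) = f x + f y) (hmul : ∀ x y, f (x * y) = f x * f y)
    (x y : B) : f (bstar x y) = bstar (f x) (f y) := by
  have hneg : ∀ x, f (-x) = -f x := map_neg (AddMonoidHom.mk' f hadd)
  rw [bstar_eq_lmap_sub, bstar_eq_lmap_sub, sub_eq_add_neg, sub_eq_add_neg, hadd, hneg,
    map_lmap hadd hmul]

theorem IsIdeal.preimage (hadd : ∀ x y, f (x + y) = f x + f y)
    (hmul : ∀ x y, f (x * y) = f x * f y) {M : Set C} (hM : IsIdeal M) :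
    IsIdeal (f ⁻¹' M) := by
  have hzero : f 0 = 0 := map_zero (AddMonoidHom.mk' f hadd)
  have hneg : ∀ x, f (-x) = -f x := map_neg (AddMonoidHom.mk' f hadd)
  have hinv : ∀ x, f x⁻¹ = (f x)⁻¹ := map_inv (MonoidHom.mk' f hmul)
  exact
    { zero_mem := by simpa only [Set.mem_preimage, hzero] using hM.zero_mem
      add_mem := fun x y hx hy => by simpa only [Set.mem_preimage, hadd] using hM.add_mem hx hy
      neg_mem := fun x hx => by simpa only [Set.mem_preimage, hneg] using hM.neg_mem hx
      add_conj_mem := fun b x hx => by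
        simpa only [Set.mem_preimage, hadd, hneg] using hM.add_conj_mem (f b) hx
      mul_mem := fun x y hx hy => by simpa only [Set.mem_preimage, hmul] using hM.mul_mem hx hy
      inv_mem := fun x hx => by simpa only [Set.mem_preimage, hinv] using hM.inv_mem hx
      mul_conj_mem := fun b x hx => by
        simpa only [Set.mem_preimage, hmul, hinv] using hM.mul_conj_mem (f b) hx
      lmap_mem := fun a x hx => by
        simpa only [Set.mem_preimage, map_lmap hadd hmul] using hM.lmap_mem (f a) hx }

end Hom

section Ideal

variable {B : Type*} [SkewLeftBrace B] {I J : Set B}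

theorem IsIdeal.bstar_mem_right (hI : IsIdeal I) (x : B) {y : B} (hy : y ∈ I) :
    bstar x y ∈ I := by
  rw [bstar_eq_lmap_sub, sub_eq_add_neg]
  exact hI.add_mem (hI.lmap_mem x hy) (hI.neg_mem hy)

theorem IsIdeal.bstar_mem_left (hI : IsIdeal I) {x : B} (hx : x ∈ I) (c : B) :
    bstar x c ∈ I := by
  have hconj : c⁻¹ * x * c ∈ I := by simpa using hI.mul_conj_mem c⁻¹ hx
  have hxc : x * c = c + lmap c (c⁻¹ * x * c) := by rw [← mul_eq_add_lmap]; group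
  rw [bstar, hxc, sub_eq_add_neg, add_assoc]
  exact hI.add_mem (hI.neg_mem hx) (hI.add_conj_mem c (hI.lmap_mem c hconj))

theorem IsIdeal.inter (hI : IsIdeal I) (hJ : IsIdeal J) : IsIdeal (I ∩ J) where
  zero_mem := ⟨hI.zero_mem, hJ.zero_mem⟩
  add_mem := fun _ _ hx hy => ⟨hI.add_mem hx.1 hy.1, hJ.add_mem hx.2 hy.2⟩
  neg_mem := fun _ hx => ⟨hI.neg_mem hx.1, hJ.neg_mem hx.2⟩
  add_conj_mem := fun b _ hx => ⟨hI.add_conj_mem b hx.1, hJ.add_conj_mem b hx.2⟩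
  mul_mem := fun _ _ hx hy => ⟨hI.mul_mem hx.1 hy.1, hJ.mul_mem hx.2 hy.2⟩
  inv_mem := fun _ hx => ⟨hI.inv_mem hx.1, hJ.inv_mem hx.2⟩
  mul_conj_mem := fun b _ hx => ⟨hI.mul_conj_mem b hx.1, hJ.mul_conj_mem b hx.2⟩
  lmap_mem := fun a _ hx => ⟨hI.lmap_mem a hx.1, hJ.lmap_mem a hx.2⟩

theorem IsIdeal.of_addSubgroup (K : AddSubgroup B) [hK : K.Normal]
    (hlmap : ∀ a, ∀ x ∈ K, lmap a x ∈ K) (hbstar : ∀ x ∈ K, ∀ c, bstar x c ∈ K) :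
    IsIdeal (K : Set B) where
  zero_mem := K.zero_mem
  add_mem := fun _ _ => K.add_mem
  neg_mem := fun _ => K.neg_mem
  add_conj_mem := fun b x hx => hK.conj_mem x hx b
  mul_mem := fun x y hx hy => by
    rw [mul_eq_add_lmap]
    exact K.add_mem hx (hlmap x y hy)
  inv_mem := fun x hx => by
    rw [inv_eq_lmap_neg]
    exact hlmap _ _ (K.neg_mem hx)
  mul_conj_mem := fun b x hx => by
    rw [mul_conj_eq]
    exact hK.conj_mem _ (K.add_mem (hlmap b x hx) (hlmap b _ (hbstar x hx b⁻¹))) b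
  lmap_mem := hlmap

theorem setStar_eq_zero_iff {X Y : Set B} :
    setStar X Y = {0} ↔ ∀ x ∈ X, ∀ y ∈ Y, bstar x y = 0 := by
  rw [setStar, ← AddSubgroup.coe_bot, SetLike.coe_set_eq, AddSubgroup.closure_eq_bot_iff]
  constructor
  · intro h x hx y hy
    exact h ⟨x, hx, y, hy, rfl⟩
  · rintro h _ ⟨x, hx, y, hy, rfl⟩
    exact h x hx y hy

theorem exists_isMinimalIdeal_subset [Finite B] (hI : IsIdeal I) (hI0 : I ≠ {0}) :
    ∃ M ⊆ I, IsMinimalIdeal M := by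
  obtain ⟨M, hMI, ⟨hM, hM0⟩, hmin⟩ :=
    exists_minimal_le_of_wellFoundedLT (fun K : Set B => IsIdeal K ∧ K ≠ {0}) I ⟨hI, hI0⟩
  refine ⟨M, hMI, hM, hM0, fun K hK hKM => ?_⟩
  by_cases hK0 : K = {0}
  · exact Or.inl hK0
  · exact Or.inr (hKM.antisymm (hmin ⟨hK, hK0⟩ hKM))

theorem IsMinimalIdeal.bstar_eq_zero {M N : Set B} (hM : IsMinimalIdeal M)
    (hN : IsMinimalIdeal N) (hMM : ∀ x ∈ M, ∀ y ∈ M, bstar x y = 0) {x y : B} (hx : x ∈ M)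
    (hy : y ∈ N) : bstar x y = 0 := by
  have hxy : bstar x y ∈ M ∩ N := ⟨hM.1.bstar_mem_left hx y, hN.1.bstar_mem_right x hy⟩
  rcases hM.2.2 _ (hM.1.inter hN.1) Set.inter_subset_left with h | h
  · rwa [h] at hxy
  · rcases hN.2.2 M hM.1 (Set.inter_eq_left.1 h) with h' | rfl
    · exact absurd h' hM.2.1
    · exact hMM x hx y hy

end Ideal

section Closure

open AddSubgroup

variable {B : Type*} [SkewLeftBrace B] {G : Set B}

theorem apply_mem_closure_of_mapsTo (f : B →+ B) (hf : Set.MapsTo f G G) {x : B}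
    (hx : x ∈ closure G) : f x ∈ closure G :=
  (closure_le ((closure G).comap f)).2 (fun _ hg => subset_closure (hf hg)) hx

theorem bstar_mem_of_mem_closure {K : AddSubgroup B} {c : B}
    (hG : ∀ a, Set.MapsTo (lmap a) G G) (hK : ∀ a, ∀ k ∈ K, lmap a k ∈ K)
    (hGc : ∀ g ∈ G, bstar g c ∈ K) {x : B} (hx : x ∈ closure G) : bstar x c ∈ K := by
  -- `bstar_add_left` twists the second summand by some `λ_d`, so the induction carries all `λ_a`.
  suffices h : ∀ a, bstar (lmap a x) c ∈ K by simpa only [lmap_one] using h 1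
  induction hx using closure_induction with
  | mem g hg => exact fun a => hGc _ (hG a hg)
  | zero => exact fun a => by rw [lmap_zero, bstar_zero_left]; exact K.zero_mem
  | add x y _ _ hx hy =>
    intro a
    rw [lmap_add, bstar_add_left, ← lmap_mul]
    exact K.add_mem (hK _ _ (hy _)) (hx a)
  | neg x _ hx =>
    intro a
    rw [lmap_neg, bstar_neg_left, ← lmap_mul]
    exact K.neg_mem (hK _ _ (hx _))

theorem bstar_eq_zero_of_mem_closure (hG : ∀ a, Set.MapsTo (lmap a) G G)
    (hGG : ∀ g ∈ G, ∀ g' ∈ G, bstar g g' = 0) {x y : B} (hx : x ∈ closure G)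
    (hy : y ∈ closure G) : bstar x y = 0 := by
  have hbot : ∀ a, ∀ k ∈ (⊥ : AddSubgroup B), lmap a k ∈ (⊥ : AddSubgroup B) := by
    intro a k hk
    rw [mem_bot] at hk ⊢
    rw [hk, lmap_zero]
  have hxG : ∀ g ∈ G, lmap x g = g := fun g hg =>
    bstar_eq_zero_iff.1 (mem_bot.1 (bstar_mem_of_mem_closure hG hbot
      (fun g' hg' => mem_bot.2 (hGG g' hg' g hg)) hx))
  exact bstar_eq_zero_iff.2 ((closure_le ((lmapAddHom x).eqLocus (.id B))).2 hxG hy)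

theorem mapsTo_lmap_iUnion {ι : Type*} {I : ι → Set B} (hI : ∀ i, IsIdeal (I i)) (a : B) :
    Set.MapsTo (lmap a) (⋃ i, I i) (⋃ i, I i) := by
  intro x hx
  obtain ⟨i, hx⟩ := Set.mem_iUnion.1 hx
  exact Set.mem_iUnion.2 ⟨i, (hI i).lmap_mem a hx⟩

theorem isIdeal_closure_iUnion {ι : Type*} {I : ι → Set B} (hI : ∀ i, IsIdeal (I i)) :
    IsIdeal (closure (⋃ i, I i) : Set B) := by
  have hlmap a x (hx : x ∈ closure (⋃ i, I i)) : lmap a x ∈ closure (⋃ i, I i) :=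
    apply_mem_closure_of_mapsTo (lmapAddHom a) (mapsTo_lmap_iUnion hI a) hx
  have : (closure (⋃ i, I i)).Normal := by
    refine ⟨fun x hx b => apply_mem_closure_of_mapsTo
      (AddMonoidHom.mk' (fun y => b + y + -b) (by simp [add_assoc])) ?_ hx⟩
    intro y hy
    obtain ⟨i, hy⟩ := Set.mem_iUnion.1 hy
    exact Set.mem_iUnion.2 ⟨i, (hI i).add_conj_mem b hy⟩
  refine IsIdeal.of_addSubgroup _ hlmap fun x hx c => ?_
  refine bstar_mem_of_mem_closure (mapsTo_lmap_iUnion hI) hlmap (fun g hg => ?_) hx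
  obtain ⟨i, hg⟩ := Set.mem_iUnion.1 hg
  exact subset_closure (Set.mem_iUnion.2 ⟨i, (hI i).bstar_mem_left hg c⟩)

end Closure

namespace BraceActionHom

variable {B₁ B₂ : Type*} [SkewLeftBrace B₁] [SkewLeftBrace B₂]
  (α : BraceActionHom B₂ B₁)

theorem act_zero (a : B₂) : α.act a 0 = 0 :=
  map_zero (AddMonoidHom.mk' (α.act a) (α.act_add a))

theorem act_act_inv (a : B₂) (x : B₁) : α.act a (α.act a⁻¹ x) = x := by
  rw [← α.act_hom, mul_inv_cancel, α.act_one]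

theorem preimage_act_inv_preimage_act (a : B₂) (S : Set B₁) :
    α.act a⁻¹ ⁻¹' (α.act a ⁻¹' S) = S := by
  ext x
  simp [α.act_act_inv]

theorem preimage_act_zero (a : B₂) : α.act a ⁻¹' {0} = {0} := by
  ext x
  exact (α.act_bijective a).1.eq_iff' (α.act_zero a)

theorem isMinimalIdeal_preimage_act {M : Set B₁} (hM : IsMinimalIdeal M) (a : B₂) :
    IsMinimalIdeal (α.act a ⁻¹' M) := by
  have hback (K : Set B₁) : K = α.act a ⁻¹' (α.act a⁻¹ ⁻¹' K) := by
    simpa using (α.preimage_act_inv_preimage_act a⁻¹ K).symm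
  refine ⟨hM.1.preimage (α.act_add a) (α.act_mul a), fun h => hM.2.1 ?_, fun K hK hKM => ?_⟩
  · rw [← α.preimage_act_inv_preimage_act a M, h, preimage_act_zero]
  have hKM' : α.act a⁻¹ ⁻¹' K ⊆ M := by
    rw [← α.preimage_act_inv_preimage_act a M]
    exact Set.preimage_mono hKM
  rcases hM.2.2 _ (hK.preimage (α.act_add a⁻¹) (α.act_mul a⁻¹)) hKM' with h | h
  · left
    rw [hback K, h, preimage_act_zero]
  · right
    rw [hback K, h]

/-- `α.act a ⁻¹' M = α_{a⁻¹}(M)`, so this is the sum of all translates of `M`. -/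
def orbitSpan (M : Set B₁) : AddSubgroup B₁ :=
  AddSubgroup.closure (⋃ a, α.act a ⁻¹' M)

theorem subset_orbitSpan (M : Set B₁) : M ⊆ α.orbitSpan M := fun x hx =>
  AddSubgroup.subset_closure (Set.mem_iUnion.2 ⟨1, by simpa [α.act_one] using hx⟩)

theorem isIdeal_orbitSpan {M : Set B₁} (hM : IsIdeal M) : IsIdeal (α.orbitSpan M : Set B₁) :=
  isIdeal_closure_iUnion fun a => hM.preimage (α.act_add a) (α.act_mul a)

theorem act_mem_orbitSpan {M : Set B₁} (b : B₂) {x : B₁} (hx : x ∈ α.orbitSpan M) :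
    α.act b x ∈ α.orbitSpan M := by
  refine apply_mem_closure_of_mapsTo (AddMonoidHom.mk' (α.act b) (α.act_add b)) ?_ hx
  intro y hy
  obtain ⟨a, hy⟩ := Set.mem_iUnion.1 hy
  refine Set.mem_iUnion.2 ⟨a * b⁻¹, ?_⟩
  simpa [← α.act_hom] using hy

theorem bstar_eq_zero_of_mem_orbitSpan {M : Set B₁} (hM : IsMinimalIdeal M)
    (hMM : ∀ x ∈ M, ∀ y ∈ M, bstar x y = 0) {x y : B₁} (hx : x ∈ α.orbitSpan M)
    (hy : y ∈ α.orbitSpan M) : bstar x y = 0 := by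
  have hsq a : ∀ x ∈ α.act a ⁻¹' M, ∀ y ∈ α.act a ⁻¹' M, bstar x y = 0 :=
    fun x hx y hy => (α.act_bijective a).1 <| by
      rw [map_bstar (α.act_add a) (α.act_mul a), hMM _ hx _ hy, α.act_zero]
  refine bstar_eq_zero_of_mem_closure
    (mapsTo_lmap_iUnion fun a => hM.1.preimage (α.act_add a) (α.act_mul a)) ?_ hx hy
  intro g hg g' hg'
  obtain ⟨a, hg⟩ := Set.mem_iUnion.1 hg
  obtain ⟨b, hg'⟩ := Set.mem_iUnion.1 hg'
  exact (α.isMinimalIdeal_preimage_act hM a).bstar_eq_zero (α.isMinimalIdeal_preimage_act hM b)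
    (hsq a) hg hg'

theorem isIdeal_sdp {J : Set B₁} (hJ : IsIdeal J) (hαJ : ∀ a, Set.MapsTo (α.act a) J J) :
    @IsIdeal _ α.sdp {p : SDP B₁ B₂ | p.fst ∈ J ∧ p.snd = 0} := by
  let _ := α.sdp
  have h01 : (0 : B₂) = 1 := zero_eq_one
  constructor
  · exact ⟨hJ.zero_mem, rfl⟩
  · rintro ⟨x, _⟩ ⟨y, _⟩ ⟨hx, rfl⟩ ⟨hy, rfl⟩
    exact ⟨hJ.add_mem hx hy, add_zero 0⟩
  · rintro ⟨x, _⟩ ⟨hx, rfl⟩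
    exact ⟨hJ.neg_mem hx, neg_zero⟩
  · rintro ⟨b, b'⟩ ⟨x, _⟩ ⟨hx, rfl⟩
    refine ⟨hJ.add_conj_mem b hx, ?_⟩
    show b' + 0 + -b' = 0
    rw [add_zero, add_neg_cancel]
  · rintro ⟨x, _⟩ ⟨y, _⟩ ⟨hx, rfl⟩ ⟨hy, rfl⟩
    refine ⟨?_, mul_zero' 0⟩
    show x * α.act 0 y ∈ J
    rw [h01, α.act_one]
    exact hJ.mul_mem hx hy
  · rintro ⟨x, _⟩ ⟨hx, rfl⟩
    refine ⟨hαJ _ (hJ.inv_mem hx), ?_⟩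
    show (0 : B₂)⁻¹ = 0
    rw [h01, inv_one]
  · rintro ⟨b, b'⟩ ⟨x, _⟩ ⟨hx, rfl⟩
    constructor
    · show b * α.act b' x * α.act (b' * 0) (α.act b'⁻¹ b⁻¹) ∈ J
      rw [mul_zero', α.act_act_inv]
      exact hJ.mul_conj_mem b (hαJ b' hx)
    · show b' * 0 * b'⁻¹ = 0
      rw [mul_zero', mul_inv_cancel, h01]
  · rintro ⟨a, a'⟩ ⟨x, _⟩ ⟨hx, rfl⟩
    constructor
    · exact hJ.lmap_mem a (hαJ a' hx)
    · show -a' + a' * 0 = 0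
      rw [mul_zero', neg_add_cancel]

theorem not_semiprime_sdp {J : Set B₁} (hJ : IsIdeal J) (hJ0 : J ≠ {0})
    (hαJ : ∀ a, Set.MapsTo (α.act a) J J) (hJJ : ∀ x ∈ J, ∀ y ∈ J, bstar x y = 0) :
    ¬ @Semiprime _ α.sdp := by
  let _ := α.sdp
  intro hsp
  refine hsp _ (α.isIdeal_sdp hJ hαJ) (fun h => hJ0 ?_) (setStar_eq_zero_iff.2 ?_)
  · refine Set.eq_singleton_iff_unique_mem.2 ⟨hJ.zero_mem, fun x hx => ?_⟩
    have hx0 : (⟨x, 0⟩ : SDP B₁ B₂) ∈ ({0} : Set (SDP B₁ B₂)) := h ▸ ⟨hx, rfl⟩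
    exact congrArg SDP.fst hx0
  · rintro ⟨x, _⟩ ⟨hx, rfl⟩ ⟨y, _⟩ ⟨hy, rfl⟩
    refine SDP.ext ?_ ?_
    · show -x + x * α.act 0 y + -y = 0
      rw [← sub_eq_add_neg, zero_eq_one (B := B₂), α.act_one]
      exact hJJ x hx y hy
    · show -0 + 0 * 0 + -0 = (0 : B₂)
      rw [neg_zero, zero_add, mul_zero', add_zero]

end BraceActionHom

end SkewLeftBrace

theorem semiprime_of_sdp_semiprime_of_finite_general {B₁ B₂ : Type*}
    [SkewLeftBrace B₁] [SkewLeftBrace B₂] [Finite B₁]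
    (α : BraceActionHom B₂ B₁)
    (hsp : @SkewLeftBrace.Semiprime _ α.sdp) :
    SkewLeftBrace.Semiprime B₁ := by
  intro I hI hI0 hII
  rw [setStar_eq_zero_iff] at hII
  obtain ⟨M, hMI, hM⟩ := exists_isMinimalIdeal_subset hI hI0
  have hMM : ∀ x ∈ M, ∀ y ∈ M, bstar x y = 0 := fun x hx y hy => hII x (hMI hx) y (hMI hy)
  have hJ0 : (α.orbitSpan M : Set B₁) ≠ {0} := fun h =>
    hM.2.1 (Set.Subset.antisymm (h ▸ α.subset_orbitSpan M)
      (Set.singleton_subset_iff.2 hM.1.zero_mem))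
  exact α.not_semiprime_sdp (α.isIdeal_orbitSpan hM.1) hJ0 (fun b _ => α.act_mem_orbitSpan b)
    (fun _ hx _ hy => α.bstar_eq_zero_of_mem_orbitSpan hM hMM hx hy) hsp

/-- If `B₁` and `B₂` are finite and the semidirect product `B₁ ⋊_α B₂` is semiprime,
then `B₁` is semiprime. -/
theorem semiprime_of_sdp_semiprime_of_finite {B₁ B₂ : Type*}
    [SkewLeftBrace B₁] [SkewLeftBrace B₂] [Finite B₁] [Finite B₂]
    (α : BraceActionHom B₂ B₁)
    (hsp : @SkewLeftBrace.Semiprime _ α.sdp) :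
    SkewLeftBrace.Semiprime B₁ :=
  semiprime_of_sdp_semiprime_of_finite_general α hsp
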